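/- arXiv:1904.01960 — 12 statements merged into one kernel-verified Lean document; each statement's English description precedes it below -/
import Mathlib

section
/- Let r, s, u, b ∈ ℂ satisfy u²b⁴ + 2rub² − 4b⁴ − 4sb² + r² − 4 = 0, and let f(x,y,z) = x⁴ + y⁴ + z⁴ + r·x²y² + s·y²z² + u·z²x². Then substituting z = −b·y gives a perfect square: f(x, y, −b·y) = (x² + ((r + u·b²)/2)·y²)² as polynomials in ℂ[x,y]. In particular the line b·y + z = 0 is a bitangent of the quartic curve X₄(r,s,u) : f = 0. -/
open MvPolynomial

/-- If `u²b⁴ + 2rub² − 4b⁴ − 4sb² + r² − 4 = 0` then substituting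
`z = −b·y` into `f = x⁴ + y⁴ + z⁴ + r·x²y² + s·y²z² + u·z²x²` gives the perfect square
`(x² + ((r + u·b²)/2)·y²)²`; hence `b·y + z = 0` is a bitangent of `X₄(r,s,u)`. -/
theorem stmt_2 (r s u b : ℂ)
    (hb : u ^ 2 * b ^ 4 + 2 * r * u * b ^ 2 - 4 * b ^ 4 - 4 * s * b ^ 2 + r ^ 2 - 4 = 0)
    (f : MvPolynomial (Fin 3) ℂ)
    (hf : f = (X 0) ^ 4 + (X 1) ^ 4 + (X 2) ^ 4 + C r * (X 0) ^ 2 * (X 1) ^ 2 +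
      C s * (X 1) ^ 2 * (X 2) ^ 2 + C u * (X 2) ^ 2 * (X 0) ^ 2) :
    aeval ![(X 0 : MvPolynomial (Fin 2) ℂ), X 1, -(C b * X 1)] f =
      ((X 0) ^ 2 + C ((r + u * b ^ 2) / 2) * (X 1) ^ 2) ^ 2 := by
  have h2 : ((r + u * b ^ 2) / 2) ^ 2 = 1 + b ^ 4 + s * b ^ 2 := by
    field_simp
    linear_combination hb
  have h3 : (r + u * b ^ 2) / 2 * 2 = r + u * b ^ 2 := by ring
  have hC : (C (((r + u * b ^ 2) / 2) ^ 2) : MvPolynomial (Fin 2) ℂ)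
      = C (1 + b ^ 4 + s * b ^ 2) := by rw [h2]
  have hC2 : (C ((r + u * b ^ 2) / 2 * 2) : MvPolynomial (Fin 2) ℂ)
      = C (r + u * b ^ 2) := by rw [h3]
  simp only [hf, map_add, map_mul, map_pow, aeval_X, aeval_C, map_neg,
    Matrix.cons_val_zero, Matrix.cons_val_one, Matrix.head_cons,
    Matrix.cons_val_two, Matrix.tail_cons, MvPolynomial.algebraMap_eq]
  simp only [map_add, map_mul, map_pow, map_one, map_ofNat] at hC hC2
  linear_combination (-((X 1 : MvPolynomial (Fin 2) ℂ) ^ 4) * hC)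
    - (X 0 : MvPolynomial (Fin 2) ℂ) ^ 2 * (X 1) ^ 2 * hC2
end

section
/- Let r, s, u, a ∈ ℂ satisfy s²a⁴ + 2rsa² − 4a⁴ − 4ua² + r² − 4 = 0, and let f(x,y,z) = x⁴ + y⁴ + z⁴ + r·x²y² + s·y²z² + u·z²x². Then substituting z = −a·x gives a perfect square: f(x, y, −a·x) = (((r + s·a²)/2)·x² + y²)² as polynomials in ℂ[x,y]. In particular the line a·x + z = 0 is a bitangent of the quartic curve X₄(r,s,u) : f = 0. -/
open MvPolynomial

/-- If `s²a⁴ + 2rsa² − 4a⁴ − 4ua² + r² − 4 = 0` then substituting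
`z = −a·x` into `f = x⁴ + y⁴ + z⁴ + r·x²y² + s·y²z² + u·z²x²` gives the perfect square
`(((r + s·a²)/2)·x² + y²)²`; hence `a·x + z = 0` is a bitangent of `X₄(r,s,u)`. -/
theorem stmt_3 (r s u a : ℂ)
    (ha : s ^ 2 * a ^ 4 + 2 * r * s * a ^ 2 - 4 * a ^ 4 - 4 * u * a ^ 2 + r ^ 2 - 4 = 0)
    (f : MvPolynomial (Fin 3) ℂ)
    (hf : f = (X 0) ^ 4 + (X 1) ^ 4 + (X 2) ^ 4 + C r * (X 0) ^ 2 * (X 1) ^ 2 +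
      C s * (X 1) ^ 2 * (X 2) ^ 2 + C u * (X 2) ^ 2 * (X 0) ^ 2) :
    aeval ![(X 0 : MvPolynomial (Fin 2) ℂ), X 1, -(C a * X 0)] f =
      (C ((r + s * a ^ 2) / 2) * (X 0) ^ 2 + (X 1) ^ 2) ^ 2 := by
  have hc : ((r + s * a ^ 2) / 2) ^ 2 = 1 + a ^ 4 + u * a ^ 2 := by
    field_simp
    linear_combination ha
  have h1 : (C ((r + s * a ^ 2) / 2) : MvPolynomial (Fin 2) ℂ) ^ 2
      = 1 + C a ^ 4 + C u * C a ^ 2 := by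
    rw [← map_pow, hc]; push_cast [map_add, map_mul, map_pow, map_one]; ring
  have h2 : (C s : MvPolynomial (Fin 2) ℂ) * C a ^ 2 + C r
      = 2 * C ((r + s * a ^ 2) / 2) := by
    rw [← map_pow, ← map_mul, ← map_add, two_mul, ← map_add]
    congr 1; ring
  subst hf
  simp only [map_add, map_mul, map_pow, map_neg, aeval_X, aeval_C, algebraMap_eq,
    Matrix.cons_val_zero, Matrix.cons_val_one, Matrix.head_cons, Matrix.cons_val_two,
    Matrix.tail_cons]
  linear_combination (-(X 0 : MvPolynomial (Fin 2) ℂ) ^ 4) * h1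
    + (X 0 : MvPolynomial (Fin 2) ℂ) ^ 2 * (X 1) ^ 2 * h2
end

section
/- Let r, s, b ∈ ℂ satisfy s²b⁴ − r·b⁴ − r·s·b² − 2b⁴ + 2s·b² − r + 2 = 0, and let f(x,y,z) = x⁴ + y⁴ + z⁴ + r·x²y² + s·(y²z² + z²x²). Then there exist λ₀, λ₁, λ₂ ∈ ℂ such that f(x, y, −b·x − b·y) = (λ₀·x² + λ₁·xy + λ₂·y²)² in ℂ[x,y]. In particular the line b·x + b·y + z = 0 is a bitangent of the quartic curve X₁₆(r,s) : f = 0. -/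
open MvPolynomial

lemma stmt_4_key (r s b l0 l1 l2 : ℂ)
    (h1 : l0^2 = 1 + b^4 + s*b^2)
    (h2 : 2*l0*l1 = 4*b^4 + 2*s*b^2)
    (h3 : 2*l0*l2 + l1^2 = 6*b^4 + r + 2*s*b^2)
    (h4 : 2*l1*l2 = 4*b^4 + 2*s*b^2)
    (h5 : l2^2 = 1 + b^4 + s*b^2) :
    ((X 0 : MvPolynomial (Fin 2) ℂ)) ^ 4 + (X 1) ^ 4 + (-(C b * X 0) - C b * X 1) ^ 4
      + C r * (X 0) ^ 2 * (X 1) ^ 2 +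
      C s * ((X 1) ^ 2 * (-(C b * X 0) - C b * X 1) ^ 2 +
        (-(C b * X 0) - C b * X 1) ^ 2 * (X 0) ^ 2) =
        (C l0 * (X 0) ^ 2 + C l1 * (X 0 * X 1) + C l2 * (X 1) ^ 2) ^ 2 := by
  have H1 := congrArg (C : ℂ → MvPolynomial (Fin 2) ℂ) h1
  have H2 := congrArg (C : ℂ → MvPolynomial (Fin 2) ℂ) h2
  have H3 := congrArg (C : ℂ → MvPolynomial (Fin 2) ℂ) h3
  have H4 := congrArg (C : ℂ → MvPolynomial (Fin 2) ℂ) h4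
  have H5 := congrArg (C : ℂ → MvPolynomial (Fin 2) ℂ) h5
  simp only [map_add, map_mul, map_pow, map_ofNat, map_one] at H1 H2 H3 H4 H5
  linear_combination -(X 0 : MvPolynomial (Fin 2) ℂ)^4 * H1 - (X 0)^3 * X 1 * H2 +
    - (X 0)^2 * (X 1)^2 * H3 - X 0 * (X 1)^3 * H4 - (X 1)^4 * H5

/-- If `s²b⁴ − rb⁴ − rsb² − 2b⁴ + 2sb² − r + 2 = 0` then substituting
`z = −b·x − b·y` into `f = x⁴ + y⁴ + z⁴ + r·x²y² + s·(y²z² + z²x²)` gives the square of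
a quadratic form; hence `b·x + b·y + z = 0` is a bitangent of `X₁₆(r,s)`. -/
theorem stmt_4 (r s b : ℂ)
    (hb : s ^ 2 * b ^ 4 - r * b ^ 4 - r * s * b ^ 2 - 2 * b ^ 4 + 2 * s * b ^ 2 - r + 2 = 0)
    (f : MvPolynomial (Fin 3) ℂ)
    (hf : f = (X 0) ^ 4 + (X 1) ^ 4 + (X 2) ^ 4 + C r * (X 0) ^ 2 * (X 1) ^ 2 +
      C s * ((X 1) ^ 2 * (X 2) ^ 2 + (X 2) ^ 2 * (X 0) ^ 2)) :
    ∃ l0 l1 l2 : ℂ,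
      aeval ![(X 0 : MvPolynomial (Fin 2) ℂ), X 1, -(C b * X 0) - C b * X 1] f =
        (C l0 * (X 0) ^ 2 + C l1 * (X 0 * X 1) + C l2 * (X 1) ^ 2) ^ 2 := by
  subst hf
  -- obtain the quadratic coefficients
  obtain ⟨l0, l1, l2, h1, h2, h3, h4, h5⟩ :
      ∃ l0 l1 l2 : ℂ, l0^2 = 1 + b^4 + s*b^2 ∧ 2*l0*l1 = 4*b^4 + 2*s*b^2 ∧
        2*l0*l2 + l1^2 = 6*b^4 + r + 2*s*b^2 ∧ 2*l1*l2 = 4*b^4 + 2*s*b^2 ∧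
        l2^2 = 1 + b^4 + s*b^2 := by
    by_cases hA : 1 + b^4 + s*b^2 = 0
    · -- degenerate case: b⁴ = 1
      have hb4 : b^4 = 1 := by
        have h : (b^4 - 1)^2 = 0 := by
          linear_combination hb - (1 - b^4 + s*b^2 - r) * hA
        exact sub_eq_zero.mp (pow_eq_zero_iff (n := 2) two_ne_zero |>.mp h)
      obtain ⟨l1, hl1⟩ := IsAlgClosed.exists_pow_nat_eq (k := ℂ) (r + 2) (n := 2) (by norm_num)
      refine ⟨0, l1, 0, ?_, ?_, ?_, ?_, ?_⟩
      · linear_combination -hA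
      · linear_combination -2*hA - 2*hb4
      · linear_combination hl1 - 2*hA - 4*hb4
      · linear_combination -2*hA - 2*hb4
      · linear_combination -hA
    · obtain ⟨l0, hl0⟩ := IsAlgClosed.exists_pow_nat_eq (k := ℂ) (1 + b^4 + s*b^2)
        (n := 2) (by norm_num)
      have hl0ne : l0 ≠ 0 := by
        intro h; rw [h] at hl0; exact hA (by simpa using hl0.symm)
      refine ⟨l0, (2*b^4 + s*b^2)/l0, l0, hl0, ?_, ?_, ?_, hl0⟩
      · field_simp
        ring
      · field_simp
        linear_combination hb + (2*l0^2 + 2 - 4*b^4 - r) * hl0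
      · field_simp
        ring
  exact ⟨l0, l1, l2, by
    simp only [map_add, map_mul, map_pow, aeval_X, aeval_C,
      Matrix.cons_val_zero, Matrix.cons_val_one, Matrix.head_cons,
      Matrix.cons_val_two, Matrix.tail_cons, algebraMap_eq]
    exact stmt_4_key r s b l0 l1 l2 h1 h2 h3 h4 h5⟩
end

section
/- Let r, s, a, b ∈ ℂ satisfy a² + b² + s = 0 and r·b⁴ + r·s·b² − 2b⁴ − 2s·b² − s² + r + 2 = 0, and let f(x,y,z) = x⁴ + y⁴ + z⁴ + r·x²y² + s·(y²z² + z²x²). Then there exist λ₀, λ₁, λ₂ ∈ ℂ such that f(x, y, −a·x − b·y) = (λ₀·x² + λ₁·xy + λ₂·y²)² in ℂ[x,y]. In particular the line a·x + b·y + z = 0 is a bitangent of the quartic curve X₁₆(r,s) : f = 0. -/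
open MvPolynomial

/-- If `a² + b² + s = 0` and `rb⁴ + rsb² − 2b⁴ − 2sb² − s² + r + 2 = 0`,
then substituting `z = −a·x − b·y` into `f = x⁴ + y⁴ + z⁴ + r·x²y² + s·(y²z² + z²x²)`
gives the square of a quadratic form; hence `a·x + b·y + z = 0` is a bitangent of
`X₁₆(r,s)`. -/
theorem stmt_5 (r s a b : ℂ)
    (h1 : a ^ 2 + b ^ 2 + s = 0)
    (h2 : r * b ^ 4 + r * s * b ^ 2 - 2 * b ^ 4 - 2 * s * b ^ 2 - s ^ 2 + r + 2 = 0)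
    (f : MvPolynomial (Fin 3) ℂ)
    (hf : f = (X 0) ^ 4 + (X 1) ^ 4 + (X 2) ^ 4 + C r * (X 0) ^ 2 * (X 1) ^ 2 +
      C s * ((X 1) ^ 2 * (X 2) ^ 2 + (X 2) ^ 2 * (X 0) ^ 2)) :
    ∃ l0 l1 l2 : ℂ,
      aeval ![(X 0 : MvPolynomial (Fin 2) ℂ), X 1, -(C a * X 0) - C b * X 1] f =
        (C l0 * (X 0) ^ 2 + C l1 * (X 0 * X 1) + C l2 * (X 1) ^ 2) ^ 2 := by
  obtain ⟨l0, hl0⟩ : ∃ z : ℂ, z ^ 2 = 1 + b ^ 4 + s * b ^ 2 :=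
    IsAlgClosed.exists_pow_nat_eq _ two_pos
  obtain ⟨m, hm⟩ : ∃ z : ℂ, z ^ 2 = r + 6 - 4 * (1 + b ^ 4 + s * b ^ 2) - s ^ 2 :=
    IsAlgClosed.exists_pow_nat_eq _ two_pos
  have hkey : (2 * l0 * m) ^ 2 = (2 * a * b * (2 * a ^ 2 + s)) ^ 2 := by
    linear_combination (4 * m ^ 2) * hl0 + (4 * (1 + b ^ 4 + s * b ^ 2)) * hm +
      (-4 * b ^ 2 * s ^ 2 - 16 * b ^ 4 * s - 16 * b ^ 6 +
        16 * a ^ 2 * b ^ 4 - 16 * a ^ 4 * b ^ 2) * h1 + 4 * h2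
  have hcases : 2 * l0 * m - 2 * a * b * (2 * a ^ 2 + s) = 0 ∨
      2 * l0 * m + 2 * a * b * (2 * a ^ 2 + s) = 0 := by
    rcases mul_eq_zero.mp (show (2 * l0 * m - 2 * a * b * (2 * a ^ 2 + s)) *
        (2 * l0 * m + 2 * a * b * (2 * a ^ 2 + s)) = 0 by linear_combination hkey) with h | h
    · exact Or.inl h
    · exact Or.inr h
  obtain ⟨l1, hl1sq, hsgn⟩ : ∃ l1 : ℂ,
      l1 ^ 2 = r + 6 - 4 * (1 + b ^ 4 + s * b ^ 2) - s ^ 2 ∧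
      2 * l0 * l1 = 2 * a * b * (2 * a ^ 2 + s) := by
    rcases hcases with h | h
    · exact ⟨m, hm, by linear_combination h⟩
    · exact ⟨-m, by linear_combination hm, by linear_combination -h⟩
  refine ⟨l0, l1, -l0, ?_⟩
  subst hf
  have H1 : (C a : MvPolynomial (Fin 2) ℂ) ^ 2 + C b ^ 2 + C s = 0 := by
    rw [← map_pow, ← map_pow, ← map_add, ← map_add, h1, map_zero]
  have Hl0 : (C l0 : MvPolynomial (Fin 2) ℂ) ^ 2 =
      1 + C b ^ 4 + C s * C b ^ 2 := by
    rw [← map_pow, hl0]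
    push_cast [← map_pow, ← map_mul, ← map_add, ← map_one (C (σ := Fin 2) (R := ℂ))]
    rfl
  have Hsgn : 2 * (C l0 : MvPolynomial (Fin 2) ℂ) * C l1 =
      2 * C a * C b * (2 * C a ^ 2 + C s) := by
    have : (C (2 * l0 * l1) : MvPolynomial (Fin 2) ℂ) =
        C (2 * a * b * (2 * a ^ 2 + s)) := by rw [hsgn]
    simpa [map_mul, map_add, map_pow, map_ofNat] using this
  have Hl1 : (C l1 : MvPolynomial (Fin 2) ℂ) ^ 2 =
      C r + 6 - 4 * (1 + C b ^ 4 + C s * C b ^ 2) - C s ^ 2 := by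
    have : (C (l1 ^ 2) : MvPolynomial (Fin 2) ℂ) =
        C (r + 6 - 4 * (1 + b ^ 4 + s * b ^ 2) - s ^ 2) := by rw [hl1sq]
    simpa [map_mul, map_add, map_sub, map_pow, map_ofNat, map_one] using this
  simp only [map_add, map_mul, map_pow, map_sub, map_neg, aeval_X, aeval_C,
    Matrix.cons_val_zero, Matrix.cons_val_one, Matrix.head_cons, Matrix.cons_val_two,
    Matrix.tail_cons, algebraMap_eq]
  linear_combination (X 0 ^ 4 * (C a ^ 2 - C b ^ 2) +
      X 0 ^ 2 * X 1 ^ 2 * (6 * C b ^ 2 + C s) +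
      X 0 * X 1 ^ 3 * (4 * C a * C b)) * H1 +
    (-(X 0 : MvPolynomial (Fin 2) ℂ) ^ 4 + 2 * X 0 ^ 2 * X 1 ^ 2 - X 1 ^ 4) * Hl0 +
    ((X 0 : MvPolynomial (Fin 2) ℂ) * X 1 ^ 3 - X 0 ^ 3 * X 1) * Hsgn +
    (-((X 0 : MvPolynomial (Fin 2) ℂ) ^ 2 * X 1 ^ 2)) * Hl1
end

section
/- Let r ∈ ℂ, let ε, δ ∈ {1, −1}, and let f(x,y,z) = x⁴ + y⁴ + z⁴ + r·(x²y² + y²z² + z²x²). Then there exist λ₀, λ₁, λ₂ ∈ ℂ such that f(x, y, −ε·x − δ·y) = (λ₀·x² + λ₁·xy + λ₂·y²)² in ℂ[x,y]. In particular each of the four lines ±x ± y + z = 0 is a bitangent of the quartic curve X₂₄(r) : f = 0. -/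
open MvPolynomial

/-- For `ε, δ ∈ {1, −1}`, substituting `z = −ε·x − δ·y` into
`f = x⁴ + y⁴ + z⁴ + r·(x²y² + y²z² + z²x²)` gives the square of a quadratic form;
hence each of the four lines `±x ± y + z = 0` is a bitangent of `X₂₄(r)`. -/
theorem stmt_6 (r ε δ : ℂ) (hε : ε = 1 ∨ ε = -1) (hδ : δ = 1 ∨ δ = -1)
    (f : MvPolynomial (Fin 3) ℂ)
    (hf : f = (X 0) ^ 4 + (X 1) ^ 4 + (X 2) ^ 4 +
      C r * ((X 0) ^ 2 * (X 1) ^ 2 + (X 1) ^ 2 * (X 2) ^ 2 + (X 2) ^ 2 * (X 0) ^ 2)) :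
    ∃ l0 l1 l2 : ℂ,
      aeval ![(X 0 : MvPolynomial (Fin 2) ℂ), X 1, -(C ε * X 0) - C δ * X 1] f =
        (C l0 * (X 0) ^ 2 + C l1 * (X 0 * X 1) + C l2 * (X 1) ^ 2) ^ 2 := by
  obtain ⟨a, ha⟩ := IsAlgClosed.exists_pow_nat_eq (2 + r) (n := 2) (by norm_num)
  refine ⟨a, ε * δ * a, a, ?_⟩
  have he : (C ε : MvPolynomial (Fin 2) ℂ) ^ 2 = 1 := by
    rw [← map_pow]
    rcases hε with h | h <;> simp [h]
  have hd : (C δ : MvPolynomial (Fin 2) ℂ) ^ 2 = 1 := by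
    rw [← map_pow]
    rcases hδ with h | h <;> simp [h]
  have hA : (C a : MvPolynomial (Fin 2) ℂ) ^ 2 = C r + 2 := by
    rw [← map_pow, ha, map_add]
    rw [map_ofNat]; ring
  subst hf
  simp only [map_add, map_mul, map_pow, aeval_X, aeval_C, Matrix.cons_val_zero,
    Matrix.cons_val_one, Matrix.head_cons, Matrix.cons_val_two, Matrix.tail_cons,
    algebraMap_eq, map_mul]
  set x : MvPolynomial (Fin 2) ℂ := X 0
  set y : MvPolynomial (Fin 2) ℂ := X 1
  set e : MvPolynomial (Fin 2) ℂ := C ε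
  set d : MvPolynomial (Fin 2) ℂ := C δ
  set A : MvPolynomial (Fin 2) ℂ := C a
  set R : MvPolynomial (Fin 2) ℂ := C r
  linear_combination (norm := ring_nf)
    ((e ^ 2 + 1 + R) * x ^ 4 + 4 * e * d * x ^ 3 * y +
        ((d ^ 2 - 1) * (6 - A ^ 2) + 6 + R - A ^ 2) * x ^ 2 * y ^ 2) * he +
      ((d ^ 2 + 1 + R) * y ^ 4 + 4 * e * d * x * y ^ 3 +
        (6 + R - A ^ 2) * x ^ 2 * y ^ 2) * hd +
      (-x ^ 4 - y ^ 4 - 2 * e * d * x ^ 3 * y - 2 * e * d * x * y ^ 3 -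
        3 * x ^ 2 * y ^ 2) * hA
end

section
/- Let r, b ∈ ℂ satisfy b² + r + 1 = 0, and let f(x,y,z) = x⁴ + y⁴ + z⁴ + r·(x²y² + y²z² + z²x²). Then there exist λ₀, λ₁, λ₂ ∈ ℂ such that f(x, y, −x − b·y) = (λ₀·x² + λ₁·xy + λ₂·y²)² in ℂ[x,y]. In particular the line x + b·y + z = 0 is a bitangent of the quartic curve X₂₄(r) : f = 0. -/
open MvPolynomial

/-- If `b² + r + 1 = 0`, then substituting `z = −x − b·y` into
`f = x⁴ + y⁴ + z⁴ + r·(x²y² + y²z² + z²x²)` gives the square of a quadratic form;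
hence the line `x + b·y + z = 0` is a bitangent of `X₂₄(r)`. -/
theorem stmt_7 (r b : ℂ) (hb : b ^ 2 + r + 1 = 0)
    (f : MvPolynomial (Fin 3) ℂ)
    (hf : f = (X 0) ^ 4 + (X 1) ^ 4 + (X 2) ^ 4 +
      C r * ((X 0) ^ 2 * (X 1) ^ 2 + (X 1) ^ 2 * (X 2) ^ 2 + (X 2) ^ 2 * (X 0) ^ 2)) :
    ∃ l0 l1 l2 : ℂ,
      aeval ![(X 0 : MvPolynomial (Fin 2) ℂ), X 1, -(X 0) - C b * X 1] f =
        (C l0 * (X 0) ^ 2 + C l1 * (X 0 * X 1) + C l2 * (X 1) ^ 2) ^ 2 := by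
  obtain ⟨c, hc⟩ : ∃ c : ℂ, c ^ 2 = 1 - b ^ 2 :=
    IsAlgClosed.exists_pow_nat_eq (1 - b ^ 2) (n := 2) two_pos
  have hr : r = -1 - b ^ 2 := by linear_combination hb
  refine ⟨c, b * c, -c, ?_⟩
  subst hf hr
  have hc' : (C c : MvPolynomial (Fin 2) ℂ) ^ 2 = 1 - C b ^ 2 := by
    rw [← map_pow, hc, map_sub, map_pow, map_one]
  simp only [map_add, map_mul, map_pow, aeval_X, aeval_C, map_neg, map_sub,
    Matrix.cons_val_zero, Matrix.cons_val_one, Matrix.head_cons, map_one,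
    Matrix.cons_val_two, Matrix.tail_cons, MvPolynomial.algebraMap_eq]
  linear_combination (-1 : MvPolynomial (Fin 2) ℂ) * (X 0 ^ 2 + C b * X 0 * X 1 - X 1 ^ 2) ^ 2 * hc'
end

section
/- Let r, b ∈ ℂ satisfy r·b² + b² + 1 = 0, and let f(x,y,z) = x⁴ + y⁴ + z⁴ + r·(x²y² + y²z² + z²x²). Then there exist λ₀, λ₁, λ₂ ∈ ℂ such that f(x, y, −b·x − b·y) = (λ₀·x² + λ₁·xy + λ₂·y²)² in ℂ[x,y]. In particular the line b·x + b·y + z = 0 is a bitangent of the quartic curve X₂₄(r) : f = 0. -/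
open MvPolynomial

/-- If `r·b² + b² + 1 = 0`, then substituting `z = −b·x − b·y` into
`f = x⁴ + y⁴ + z⁴ + r·(x²y² + y²z² + z²x²)` gives the square of a quadratic form;
hence the line `b·x + b·y + z = 0` is a bitangent of `X₂₄(r)`. -/
theorem stmt_8 (r b : ℂ) (hb : r * b ^ 2 + b ^ 2 + 1 = 0)
    (f : MvPolynomial (Fin 3) ℂ)
    (hf : f = (X 0) ^ 4 + (X 1) ^ 4 + (X 2) ^ 4 +
      C r * ((X 0) ^ 2 * (X 1) ^ 2 + (X 1) ^ 2 * (X 2) ^ 2 + (X 2) ^ 2 * (X 0) ^ 2)) :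
    ∃ l0 l1 l2 : ℂ,
      aeval ![(X 0 : MvPolynomial (Fin 2) ℂ), X 1, -(C b * X 0) - C b * X 1] f =
        (C l0 * (X 0) ^ 2 + C l1 * (X 0 * X 1) + C l2 * (X 1) ^ 2) ^ 2 := by
  obtain ⟨u, hu⟩ : ∃ u : ℂ, u ^ 2 = r + 2 := by
    exact IsAlgClosed.exists_pow_nat_eq (r + 2) zero_lt_two
  refine ⟨-u * b ^ 2, u * (r - 1) * b ^ 2, -u * b ^ 2, ?_⟩
  subst hf
  have hA : (C (r * b ^ 2 + b ^ 2 + 1) : MvPolynomial (Fin 2) ℂ) = 0 := by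
    rw [hb]; simp
  have hB : (C (u ^ 2 - (r + 2)) : MvPolynomial (Fin 2) ℂ) = 0 := by
    rw [hu]; simp
  simp only [map_add, map_mul, map_pow, aeval_X, aeval_C, Matrix.cons_val_zero,
    Matrix.cons_val_one, Matrix.head_cons, Matrix.cons_val_two, Matrix.tail_cons,
    algebraMap_eq, map_neg, map_sub, map_one, map_ofNat]
  simp only [map_add, map_mul, map_pow, map_sub, map_neg, map_one, map_ofNat] at hA hB
  linear_combination
    ((1 - C b ^ 2) * X 0 ^ 4 + 2 * C r * C b ^ 2 * X 0 ^ 3 * X 1 +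
      C r * (1 + (1 - C r) * C b ^ 2) * X 0 ^ 2 * X 1 ^ 2 +
      2 * C r * C b ^ 2 * X 0 * X 1 ^ 3 + (1 - C b ^ 2) * X 1 ^ 4) * hA +
    (-(C b ^ 4) * X 0 ^ 4 + 2 * (C r - 1) * C b ^ 4 * X 0 ^ 3 * X 1 -
      ((C r - 1) ^ 2 + 2) * C b ^ 4 * X 0 ^ 2 * X 1 ^ 2 +
      2 * (C r - 1) * C b ^ 4 * X 0 * X 1 ^ 3 - C b ^ 4 * X 1 ^ 4) * hB
end

section
/- Let r, b ∈ ℂ satisfy r·b⁴ + 2b⁴ + 2r·b² + r + 2 = 0, and let f(x,y,z) = x⁴ + y⁴ + z⁴ + r·(x²y² + y²z² + z²x²). Then substituting z = −b·y gives a perfect square: f(x, y, −b·y) = (x² + (r·(1 + b²)/2)·y²)² in ℂ[x,y]. In particular the line b·y + z = 0 is a bitangent of the quartic curve X₂₄(r) : f = 0. -/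
open MvPolynomial

/-- If `r·b⁴ + 2b⁴ + 2r·b² + r + 2 = 0`, then substituting `z = −b·y` into
`f = x⁴ + y⁴ + z⁴ + r·(x²y² + y²z² + z²x²)` gives the perfect square
`(x² + (r·(1 + b²)/2)·y²)²`; hence the line `b·y + z = 0` is a bitangent of `X₂₄(r)`. -/
theorem stmt_9 (r b : ℂ)
    (hb : r * b ^ 4 + 2 * b ^ 4 + 2 * r * b ^ 2 + r + 2 = 0)
    (f : MvPolynomial (Fin 3) ℂ)
    (hf : f = (X 0) ^ 4 + (X 1) ^ 4 + (X 2) ^ 4 +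
      C r * ((X 0) ^ 2 * (X 1) ^ 2 + (X 1) ^ 2 * (X 2) ^ 2 + (X 2) ^ 2 * (X 0) ^ 2)) :
    aeval ![(X 0 : MvPolynomial (Fin 2) ℂ), X 1, -(C b * X 1)] f =
      ((X 0) ^ 2 + C (r * (1 + b ^ 2) / 2) * (X 1) ^ 2) ^ 2 := by
  subst hf
  set c : ℂ := r * (1 + b ^ 2) / 2 with hcdef
  have hc2 : c ^ 2 = 1 + b ^ 4 + r * b ^ 2 := by
    rw [hcdef]; linear_combination (-(2 - r) / 4) * hb
  have hc1 : 2 * c = r * (1 + b ^ 2) := by rw [hcdef]; ring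
  have hC2 : (C c : MvPolynomial (Fin 2) ℂ) ^ 2
      = 1 + C b ^ 4 + C r * C b ^ 2 := by
    have := congrArg (C : ℂ →+* MvPolynomial (Fin 2) ℂ) hc2
    simpa [map_add, map_mul, map_pow] using this
  have hC1 : (2 : MvPolynomial (Fin 2) ℂ) * C c = C r * (1 + C b ^ 2) := by
    have := congrArg (C : ℂ →+* MvPolynomial (Fin 2) ℂ) hc1
    simpa [map_add, map_mul, map_ofNat] using this
  simp only [map_add, map_mul, map_pow, map_neg, aeval_X, aeval_C,
    Matrix.cons_val_zero, Matrix.cons_val_one, Matrix.head_cons,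
    Matrix.cons_val_two, Matrix.tail_cons, algebraMap_eq]
  linear_combination (-(X 1 : MvPolynomial (Fin 2) ℂ) ^ 4) * hC2
    - (X 0 : MvPolynomial (Fin 2) ℂ) ^ 2 * (X 1) ^ 2 * hC1
end

section
/- Let a, b ∈ ℂ satisfy a⁴ = 1 and b⁴ = 1. Then in ℂ[x,y] one has the identity x⁴ + y⁴ + (a·x + b·y)⁴ = 2·(x² + a³·b·xy + a²·b²·y²)². In particular each of the 16 lines a·x + b·y + z = 0 with a⁴ = b⁴ = 1 is a bitangent of the Fermat quartic X₉₆ : x⁴ + y⁴ + z⁴ = 0. -/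
open MvPolynomial

/-- If `a⁴ = 1` and `b⁴ = 1`, then in `ℂ[x,y]` one has
`x⁴ + y⁴ + (a·x + b·y)⁴ = 2·(x² + a³·b·xy + a²·b²·y²)²`; hence each of the 16 lines
`a·x + b·y + z = 0` with `a⁴ = b⁴ = 1` is a bitangent of the Fermat quartic `X₉₆`. -/
theorem stmt_10 (a b : ℂ) (ha : a ^ 4 = 1) (hb : b ^ 4 = 1) :
    (X 0) ^ 4 + (X 1) ^ 4 + (C a * X 0 + C b * X 1) ^ 4 =
      (2 : MvPolynomial (Fin 2) ℂ) *
        ((X 0) ^ 2 + C (a ^ 3 * b) * (X 0 * X 1) + C (a ^ 2 * b ^ 2) * (X 1) ^ 2) ^ 2 := by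
  have hA : (C a : MvPolynomial (Fin 2) ℂ) ^ 4 = 1 := by rw [← map_pow, ha, map_one]
  have hB : (C b : MvPolynomial (Fin 2) ℂ) ^ 4 = 1 := by rw [← map_pow, hb, map_one]
  simp only [map_mul, map_pow]
  linear_combination (X 0 ^ 4 - 2 * (C b) ^ 4 * X 1 ^ 4 - 2 * (C a) ^ 2 * (C b) ^ 2 * X 0 ^ 2 * X 1 ^ 2 - 4 * C a * (C b) ^ 3 * X 0 * X 1 ^ 3) * hA - X 1 ^ 4 * hB
end

section
/- Let p, q, b, c, d, e ∈ ℂ satisfy p·q = 1, (b² − e²)·(q + p) + (c² − d²)·(q − p) = 0, and (b·e − c·d)² = 1. Set r = −(p² + q²), s = (c² + d²) − (b² + e²), and u = −(b² + c² + d² + e²). Then in ℂ[x,y,z] the determinant of the 4×4 matrix with rows (x + p·y, 0, b·z, d·z), (0, x − p·y, c·z, e·z), (b·z, c·z, x + q·y, 0), (d·z, e·z, 0, x − q·y) equals x⁴ + y⁴ + z⁴ + r·x²y² + s·y²z² + u·z²x². -/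
/-!
The matrix is `[[D₁, Z], [Zᵀ, D₂]]` with diagonal `D₁ = diag(x + py, x - py)`,
`D₂ = diag(x + qy, x - qy)` and `Z = z·[[b, d], [c, e]]`, so its determinant is
`det D₁ · det D₂ - (x ± py)(x ± qy)·(cross terms)·z² + (det Z)²`. The hypotheses are exactly what
makes this equal the ternary quartic: `pq = 1` turns `p²q²y⁴` into `y⁴` and fixes the `y²z²`
coefficient, the linear relation kills the `xyz²` term, and `(be - cd)² = 1` normalises `z⁴`.
-/

open MvPolynomial

theorem Matrix.det_fin_four_of_diagonal_blocks {R : Type*} [CommRing R]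
    (a₁ a₂ a₃ a₄ b c d e : R) :
    !![a₁, 0, b, d; 0, a₂, c, e; b, c, a₃, 0; d, e, 0, a₄].det =
      a₁ * a₂ * a₃ * a₄ - a₂ * a₄ * b ^ 2 - a₂ * a₃ * d ^ 2 - a₁ * a₄ * c ^ 2 - a₁ * a₃ * e ^ 2
        + (b * e - c * d) ^ 2 := by
  simp [Matrix.det_succ_row_zero, Fin.sum_univ_succ, Fin.succAbove]
  ring

theorem det_pencil_eq_ternary_quartic {R : Type*} [CommRing R] (p q b c d e x y z : R)
    (hpq : p * q = 1)
    (h₁ : (b ^ 2 - e ^ 2) * (q + p) + (c ^ 2 - d ^ 2) * (q - p) = 0)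
    (h₂ : (b * e - c * d) ^ 2 = 1) :
    !![x + p * y, 0, b * z, d * z;
       0, x - p * y, c * z, e * z;
       b * z, c * z, x + q * y, 0;
       d * z, e * z, 0, x - q * y].det =
      x ^ 4 + y ^ 4 + z ^ 4 + -(p ^ 2 + q ^ 2) * x ^ 2 * y ^ 2
        + ((c ^ 2 + d ^ 2) - (b ^ 2 + e ^ 2)) * y ^ 2 * z ^ 2
        + -(b ^ 2 + c ^ 2 + d ^ 2 + e ^ 2) * z ^ 2 * x ^ 2 := by
  rw [Matrix.det_fin_four_of_diagonal_blocks]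
  linear_combination ((p * q + 1) * y ^ 4 + (c ^ 2 + d ^ 2 - b ^ 2 - e ^ 2) * y ^ 2 * z ^ 2) * hpq
    + x * y * z ^ 2 * h₁ + z ^ 4 * h₂

/-- With `p·q = 1`, `(b²−e²)(q+p)+(c²−d²)(q−p) = 0`, `(be−cd)² = 1`,
`r = −(p²+q²)`, `s = (c²+d²)−(b²+e²)`, `u = −(b²+c²+d²+e²)`, the determinant of the
matrix `x·A + y·B + z·C` (rows `(x+py, 0, bz, dz)`, `(0, x−py, cz, ez)`,
`(bz, cz, x+qy, 0)`, `(dz, ez, 0, x−qy)`) equals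
`x⁴ + y⁴ + z⁴ + r·x²y² + s·y²z² + u·z²x²` in `ℂ[x,y,z]`. -/
theorem stmt_13 (p q b c d e r s u : ℂ)
    (hpq : p * q = 1)
    (h1 : (b ^ 2 - e ^ 2) * (q + p) + (c ^ 2 - d ^ 2) * (q - p) = 0)
    (h2 : (b * e - c * d) ^ 2 = 1)
    (hr : r = -(p ^ 2 + q ^ 2))
    (hs : s = (c ^ 2 + d ^ 2) - (b ^ 2 + e ^ 2))
    (hu : u = -(b ^ 2 + c ^ 2 + d ^ 2 + e ^ 2)) :
    Matrix.det
      !![X 0 + MvPolynomial.C p * X 1, 0, MvPolynomial.C b * X 2, MvPolynomial.C d * X 2;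
         0, X 0 - MvPolynomial.C p * X 1, MvPolynomial.C c * X 2, MvPolynomial.C e * X 2;
         MvPolynomial.C b * X 2, MvPolynomial.C c * X 2, X 0 + MvPolynomial.C q * X 1, 0;
         (MvPolynomial.C d * X 2 : MvPolynomial (Fin 3) ℂ), MvPolynomial.C e * X 2, 0,
           X 0 - MvPolynomial.C q * X 1] =
      (X 0) ^ 4 + (X 1) ^ 4 + (X 2) ^ 4 + MvPolynomial.C r * (X 0) ^ 2 * (X 1) ^ 2 +
        MvPolynomial.C s * (X 1) ^ 2 * (X 2) ^ 2 +
        MvPolynomial.C u * (X 2) ^ 2 * (X 0) ^ 2 := by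
  subst hr hs hu
  simp only [map_neg, map_add, map_sub, map_pow]
  refine det_pencil_eq_ternary_quartic _ _ _ _ _ _ _ _ _ ?_ ?_ ?_
  · rw [← map_mul, hpq, map_one]
  · simpa using congrArg C h1
  · simpa using congrArg C h2
end

section
/- Let s, u ∈ ℂ and let p, q ∈ ℂ satisfy p·q = 1, p ≠ q and p ≠ −q. Then there exist a, b, c, d, e, f ∈ ℂ satisfying the six equations: (b² − e²)·(q + p) + (c² − d²)·(q − p) = 0; a²·q² − b² + c² + d² − e² + f²·p² = s; a² + b² + c² + d² + e² + f² = −u; a·d·e·q − a·b·c·q + c·e·f·p − b·d·f·p = 0; c·e·f + b·d·f + a·d·e + a·b·c = 0; a²·f² − 2a·b·e·f − 2a·c·d·f + b²·e² − 2b·c·d·e + c²·d² = 1. -/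
/-- For `s, u ∈ ℂ` and `p, q ∈ ℂ` with `p·q = 1`, `p ≠ q`, `p ≠ −q`,
the system of six equations (coming from the matrix representation problem for
`X₄(r,s,u)` with `r = −(p²+q²)`) has a solution `a, b, c, d, e, f ∈ ℂ`. -/
theorem stmt_14 (s u p q : ℂ) (hpq : p * q = 1) (hne : p ≠ q) (hne' : p ≠ -q) :
    ∃ a b c d e f : ℂ,
      (b ^ 2 - e ^ 2) * (q + p) + (c ^ 2 - d ^ 2) * (q - p) = 0 ∧
      a ^ 2 * q ^ 2 - b ^ 2 + c ^ 2 + d ^ 2 - e ^ 2 + f ^ 2 * p ^ 2 = s ∧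
      a ^ 2 + b ^ 2 + c ^ 2 + d ^ 2 + e ^ 2 + f ^ 2 = -u ∧
      a * d * e * q - a * b * c * q + c * e * f * p - b * d * f * p = 0 ∧
      c * e * f + b * d * f + a * d * e + a * b * c = 0 ∧
      a ^ 2 * f ^ 2 - 2 * a * b * e * f - 2 * a * c * d * f + b ^ 2 * e ^ 2 -
        2 * b * c * d * e + c ^ 2 * d ^ 2 = 1 := by
  -- notation
  set α : ℂ := (p ^ 2 + q ^ 2) ^ 2 - 4 with hαdef
  set β : ℂ := -2 * s * (p ^ 2 + q ^ 2) - 4 * u with hβdef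
  set γ : ℂ := s ^ 2 - 4 with hγdef
  have hαfac : α = (p - q) ^ 2 * (p + q) ^ 2 := by
    rw [hαdef]
    linear_combination (4 * (p * q + 1)) * hpq
  have hα0 : α ≠ 0 := by
    rw [hαfac]
    exact mul_ne_zero (pow_ne_zero _ (sub_ne_zero.mpr hne))
      (pow_ne_zero _ (by simpa [sub_neg_eq_add] using sub_ne_zero.mpr hne'))
  obtain ⟨δ, hδ⟩ := IsAlgClosed.exists_pow_nat_eq (k := ℂ) (β ^ 2 - 4 * α * γ) (n := 2)
    (by norm_num)
  set x : ℂ := (-β + δ) / (2 * α) with hxdef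
  have h2 : 2 * α * x = -β + δ := by
    rw [hxdef]; field_simp
  have hx : ((p ^ 2 + q ^ 2) * x - s) ^ 2 = 4 + 4 * x ^ 2 + 4 * u * x := by
    have key : 4 * α * (((p ^ 2 + q ^ 2) * x - s) ^ 2 - (4 + 4 * x ^ 2 + 4 * u * x)) = 0 := by
      linear_combination (2 * α * x + β + δ) * h2 + hδ
    have h4α : (4 : ℂ) * α ≠ 0 := mul_ne_zero (by norm_num) hα0
    have h := (mul_eq_zero.mp key).resolve_left h4α
    linear_combination h
  obtain ⟨a, ha⟩ := IsAlgClosed.exists_pow_nat_eq (k := ℂ) x (n := 2) (by norm_num)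
  obtain ⟨w, hw⟩ := IsAlgClosed.exists_pow_nat_eq (k := ℂ)
    ((-u - 2 * x) + ((p ^ 2 + q ^ 2) * x - s)) (n := 2) (by norm_num)
  obtain ⟨v, hv⟩ := IsAlgClosed.exists_pow_nat_eq (k := ℂ)
    ((-u - 2 * x) - ((p ^ 2 + q ^ 2) * x - s)) (n := 2) (by norm_num)
  refine ⟨a, w / 2, -v / 2, -v / 2, w / 2, -a, by ring, ?_, ?_, by ring, by ring, ?_⟩
  · linear_combination (p ^ 2 + q ^ 2) * ha + (1 / 2) * hv - (1 / 2) * hw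
  · linear_combination 2 * ha + (1 / 2) * hw + (1 / 2) * hv
  · linear_combination (a ^ 2 + x + (w ^ 2 + v ^ 2) / 2) * ha +
      (x / 2 + (w ^ 2 - v ^ 2 + 2 * ((p ^ 2 + q ^ 2) * x - s)) / 16) * hw +
      (x / 2 - (w ^ 2 - v ^ 2 + 2 * ((p ^ 2 + q ^ 2) * x - s)) / 16) * hv + hx / 4
end

section
/- Let r, s, u ∈ ℂ with r ≠ 2 and r ≠ −2. Then there exist symmetric matrices B, C ∈ Mat₄(ℂ) (i.e. Bᵀ = B and Cᵀ = C) such that, regarding x·I + y·B + z·C as a 4×4 matrix over the polynomial ring ℂ[x,y,z] (I the identity matrix), one has det(x·I + y·B + z·C) = x⁴ + y⁴ + z⁴ + r·x²y² + s·y²z² + u·z²x². Moreover B can be taken diagonal and C can be taken with zero diagonal. -/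
open MvPolynomial

/-! Take `B = diag(a, -a, b, -b)` and `C` supported on the entries `(i, j)` with `i + j` odd,
filled with `m, n, p`. Then `det(x I + y B + z C)` has only even powers of `y` and `z`, and matching
it with the quartic asks for `a b = 1`, `a² + b² = -r` and three equations in `m², n², p², m n`.
The first pair comes from a root of `t² + r t + 1`; `r ≠ ±2` makes `a² ≠ b²`, which lets the
remaining system be reduced to a single quadratic equation. -/

theorem IsAlgClosed.exists_quadratic_eq_zero {K : Type*} [Field K] [IsAlgClosed K] {α : K}
    (hα : α ≠ 0) (β γ : K) : ∃ t, α * t ^ 2 + β * t + γ = 0 := by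
  obtain ⟨t, ht⟩ := IsAlgClosed.exists_root
    (Polynomial.C α * Polynomial.X ^ 2 + Polynomial.C β * Polynomial.X + Polynomial.C γ)
    (by rw [Polynomial.degree_quadratic hα]; decide)
  exact ⟨t, by simpa using ht⟩

theorem IsAlgClosed.exists_sq_eq_and_sq_eq_and_mul_eq {K : Type*} [Field K] [IsAlgClosed K]
    {M N Q : K} (h : M * N = Q ^ 2) : ∃ m n : K, m ^ 2 = M ∧ n ^ 2 = N ∧ m * n = Q := by
  obtain ⟨m, rfl⟩ := IsAlgClosed.exists_pow_nat_eq M two_pos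
  obtain ⟨n, rfl⟩ := IsAlgClosed.exists_pow_nat_eq N two_pos
  have : (m * n - Q) * (m * n + Q) = 0 := by linear_combination h
  rcases mul_eq_zero.mp this with h' | h'
  · exact ⟨m, n, rfl, rfl, by linear_combination h'⟩
  · exact ⟨m, -n, rfl, by ring, by linear_combination -h'⟩

section Pencil

variable {R : Type*} [CommRing R]

def signedDiagonal (a b : R) : Matrix (Fin 4) (Fin 4) R := Matrix.diagonal ![a, -a, b, -b]

def oddCheckerboard (m n p : R) : Matrix (Fin 4) (Fin 4) R :=
  !![0, m, 0, p; m, 0, p, 0; 0, p, 0, n; p, 0, n, 0]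

theorem oddCheckerboard_transpose (m n p : R) :
    (oddCheckerboard m n p).transpose = oddCheckerboard m n p := by
  ext i j; fin_cases i <;> fin_cases j <;> rfl

theorem oddCheckerboard_apply_self (m n p : R) (i : Fin 4) : oddCheckerboard m n p i i = 0 := by
  fin_cases i <;> rfl

theorem signedDiagonal_map {S : Type*} [CommRing S] (f : R →+* S) (a b : R) :
    (signedDiagonal a b).map f = signedDiagonal (f a) (f b) := by
  rw [signedDiagonal, Matrix.diagonal_map (map_zero f)]
  congr 1; ext i; fin_cases i <;> simp

theorem oddCheckerboard_map {S : Type*} [CommRing S] (f : R →+* S) (m n p : R) :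
    (oddCheckerboard m n p).map f = oddCheckerboard (f m) (f n) (f p) := by
  ext i j; fin_cases i <;> fin_cases j <;> simp [oddCheckerboard]

theorem det_smul_one_add_smul_signedDiagonal_add_smul_oddCheckerboard (x y z a b m n p : R) :
    (x • 1 + y • signedDiagonal a b + z • oddCheckerboard m n p).det =
      x ^ 4 + a ^ 2 * b ^ 2 * y ^ 4 + (p ^ 2 - m * n) ^ 2 * z ^ 4 - (a ^ 2 + b ^ 2) * x ^ 2 * y ^ 2
        + (b ^ 2 * m ^ 2 + a ^ 2 * n ^ 2 + 2 * a * b * p ^ 2) * y ^ 2 * z ^ 2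
        - (m ^ 2 + n ^ 2 + 2 * p ^ 2) * z ^ 2 * x ^ 2 := by
  rw [Matrix.det_succ_row_zero]
  simp [Fin.sum_univ_succ, Matrix.det_fin_three, signedDiagonal, oddCheckerboard,
    Matrix.one_apply, Fin.succAbove]
  ring

theorem det_smul_one_add_smul_map_signedDiagonal_add_smul_map_oddCheckerboard {K : Type*}
    [CommRing K] (f : K →+* R) (x y z : R) (a b m n p : K) :
    (x • 1 + y • (signedDiagonal a b).map f + z • (oddCheckerboard m n p).map f).det =
      x ^ 4 + f (a ^ 2 * b ^ 2) * y ^ 4 + f ((p ^ 2 - m * n) ^ 2) * z ^ 4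
        - f (a ^ 2 + b ^ 2) * x ^ 2 * y ^ 2
        + f (b ^ 2 * m ^ 2 + a ^ 2 * n ^ 2 + 2 * a * b * p ^ 2) * y ^ 2 * z ^ 2
        - f (m ^ 2 + n ^ 2 + 2 * p ^ 2) * z ^ 2 * x ^ 2 := by
  rw [signedDiagonal_map, oddCheckerboard_map,
    det_smul_one_add_smul_signedDiagonal_add_smul_oddCheckerboard]
  simp only [map_add, map_sub, map_mul, map_pow, map_ofNat]

end Pencil

theorem sq_ne_sq_of_mul_eq_one_of_sq_add_sq_eq_neg {K : Type*} [CommRing K] [IsDomain K]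
    {a b r : K} (hab : a * b = 1) (hsum : a ^ 2 + b ^ 2 = -r) (hr : r ≠ 2) (hr' : r ≠ -2) :
    a ^ 2 ≠ b ^ 2 := by
  intro h
  have : (r - 2) * (r + 2) = 0 := by
    linear_combination (r - a ^ 2 - b ^ 2) * hsum + 4 * (a * b + 1) * hab + (a ^ 2 - b ^ 2) * h
  rcases mul_eq_zero.mp this with h' | h'
  · exact hr (sub_eq_zero.mp h')
  · exact hr' (eq_neg_of_add_eq_zero_left h')

section AlgClosed

variable {K : Type*} [Field K] [IsAlgClosed K]

theorem IsAlgClosed.exists_mul_eq_one_and_sq_add_sq_eq_neg (r : K) :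
    ∃ a b : K, a * b = 1 ∧ a ^ 2 + b ^ 2 = -r := by
  obtain ⟨t, ht⟩ := IsAlgClosed.exists_quadratic_eq_zero one_ne_zero r 1
  have ht0 : t ≠ 0 := by rintro rfl; simp at ht
  obtain ⟨a, rfl⟩ := IsAlgClosed.exists_pow_nat_eq t two_pos
  have ha0 : a ≠ 0 := by rintro rfl; simp at ht0
  refine ⟨a, a⁻¹, mul_inv_cancel₀ ha0, ?_⟩
  field_simp
  linear_combination ht

/- With `M = m²`, `N = n²`, `P = p²` the first two equations are linear in `M, N` with
determinant `a² - b²`; substituting their solution into `M N = (P - 1)²` leaves a quadratic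
in `P` whose leading coefficient is `(a - b)⁴`. -/
theorem IsAlgClosed.exists_oddCheckerboard_coeffs {a b : K} (hab : a * b = 1)
    (hne : a ^ 2 ≠ b ^ 2) (s u : K) : ∃ m n p : K, m ^ 2 + n ^ 2 + 2 * p ^ 2 = -u ∧
      b ^ 2 * m ^ 2 + a ^ 2 * n ^ 2 + 2 * a * b * p ^ 2 = s ∧ p ^ 2 - m * n = 1 := by
  set d := a ^ 2 - b ^ 2
  have hd : d ≠ 0 := sub_ne_zero.mpr hne
  have hlead : d ^ 2 + 4 * (a ^ 2 - 1) * (b ^ 2 - 1) ≠ 0 := by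
    have : a - b ≠ 0 := sub_ne_zero.mpr (by rintro rfl; exact hne rfl)
    convert pow_ne_zero 4 this using 1
    linear_combination (4 * a ^ 2 + 4 * b ^ 2 - 4 * a * b - 4) * hab
  obtain ⟨P, hP⟩ := IsAlgClosed.exists_quadratic_eq_zero hlead
    (-2 * d ^ 2 + 2 * (a ^ 2 - 1) * (s + b ^ 2 * u) + 2 * (b ^ 2 - 1) * (s + a ^ 2 * u))
    (d ^ 2 + (s + a ^ 2 * u) * (s + b ^ 2 * u))
  obtain ⟨m, n, hm, hn, hmn⟩ := IsAlgClosed.exists_sq_eq_and_sq_eq_and_mul_eq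
    (M := -(s + a ^ 2 * u + 2 * (a ^ 2 - 1) * P) / d)
    (N := (s + b ^ 2 * u + 2 * (b ^ 2 - 1) * P) / d)
    (Q := P - 1) (by field_simp; linear_combination -hP)
  obtain ⟨p, rfl⟩ := IsAlgClosed.exists_pow_nat_eq P two_pos
  refine ⟨m, n, p, ?_, ?_, by linear_combination -hmn⟩
  · rw [hm, hn]; field_simp; ring
  · rw [hm, hn]; field_simp; linear_combination (2 * d * p ^ 2) * hab

end AlgClosed

/-- For `r, s, u ∈ ℂ` with `r ≠ 2` and `r ≠ −2`, there exist symmetric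
matrices `B, C ∈ Mat₄(ℂ)`, with `B` diagonal and `C` of zero diagonal, such that
`det(x·I + y·B + z·C) = x⁴ + y⁴ + z⁴ + r·x²y² + s·y²z² + u·z²x²` in `ℂ[x,y,z]`. -/
theorem stmt_15 (r s u : ℂ) (hr2 : r ≠ 2) (hr2' : r ≠ -2) :
    ∃ B M : Matrix (Fin 4) (Fin 4) ℂ,
      B.transpose = B ∧ M.transpose = M ∧
      (∀ i j : Fin 4, i ≠ j → B i j = 0) ∧
      (∀ i : Fin 4, M i i = 0) ∧
      Matrix.det
        ((X 0 : MvPolynomial (Fin 3) ℂ) • (1 : Matrix (Fin 4) (Fin 4) (MvPolynomial (Fin 3) ℂ)) +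
          (X 1 : MvPolynomial (Fin 3) ℂ) • B.map MvPolynomial.C +
          (X 2 : MvPolynomial (Fin 3) ℂ) • M.map MvPolynomial.C) =
        (X 0) ^ 4 + (X 1) ^ 4 + (X 2) ^ 4 + MvPolynomial.C r * (X 0) ^ 2 * (X 1) ^ 2 +
          MvPolynomial.C s * (X 1) ^ 2 * (X 2) ^ 2 +
          MvPolynomial.C u * (X 2) ^ 2 * (X 0) ^ 2 := by
  obtain ⟨a, b, hab, hsum⟩ := IsAlgClosed.exists_mul_eq_one_and_sq_add_sq_eq_neg r
  obtain ⟨m, n, p, hu, hs, hmnp⟩ := IsAlgClosed.exists_oddCheckerboard_coeffs hab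
    (sq_ne_sq_of_mul_eq_one_of_sq_add_sq_eq_neg hab hsum hr2 hr2') s u
  refine ⟨signedDiagonal a b, oddCheckerboard m n p, Matrix.diagonal_transpose _,
    oddCheckerboard_transpose m n p, fun i j => Matrix.diagonal_apply_ne _,
    oddCheckerboard_apply_self m n p, ?_⟩
  rw [det_smul_one_add_smul_map_signedDiagonal_add_smul_map_oddCheckerboard, ← mul_pow, hab,
    hmnp, hsum, hs, hu]
  simp only [one_pow, map_one, map_neg]
  ring
end
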